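/- Let ψ₁, ψ₂ : ℂ → ℂ be smooth solutions of ∂ψ₁ = (|ψ₁|² + |ψ₂|²)ψ₂, ∂̄ψ₂ = −(|ψ₁|² + |ψ₂|²)ψ₁, with ψ₂ ≠ 0 on an open set. Then ρ := i·ψ̄₁/ψ₂ satisfies the sigma-model equation ∂∂̄ρ − (2ρ̄/(1 + |ρ|²))·∂ρ·∂̄ρ = 0 on that set. -/

import Mathlib

open Complex ComplexConjugate

/-- Wirtinger derivative ∂ = (∂ₓ - i∂_y)/2. -/
noncomputable def wd (f : ℂ → ℂ) (z : ℂ) : ℂ :=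
  (fderiv ℝ f z 1 - Complex.I * fderiv ℝ f z Complex.I) / 2

/-- Wirtinger derivative ∂̄ = (∂ₓ + i∂_y)/2. -/
noncomputable def wdb (f : ℂ → ℂ) (z : ℂ) : ℂ :=
  (fderiv ℝ f z 1 + Complex.I * fderiv ℝ f z Complex.I) / 2

section helpers

variable {f g : ℂ → ℂ} {z : ℂ}

lemma wd_congr (h : f =ᶠ[nhds z] g) : wd f z = wd g z := by
  unfold wd; rw [h.fderiv_eq]

lemma wd_mul (hf : DifferentiableAt ℝ f z) (hg : DifferentiableAt ℝ g z) :
    wd (fun w => f w * g w) z = wd f z * g z + f z * wd g z := by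
  unfold wd
  rw [fderiv_fun_mul hf hg]
  simp only [ContinuousLinearMap.add_apply, ContinuousLinearMap.smul_apply, smul_eq_mul]
  ring

lemma wdb_mul (hf : DifferentiableAt ℝ f z) (hg : DifferentiableAt ℝ g z) :
    wdb (fun w => f w * g w) z = wdb f z * g z + f z * wdb g z := by
  unfold wdb
  rw [fderiv_fun_mul hf hg]
  simp only [ContinuousLinearMap.add_apply, ContinuousLinearMap.smul_apply, smul_eq_mul]
  ring

lemma fderiv_conj_apply (hf : DifferentiableAt ℝ f z) (v : ℂ) :
    fderiv ℝ (fun w => conj (f w)) z v = conj (fderiv ℝ f z v) := by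
  have : (fun w => conj (f w)) = (Complex.conjCLE : ℂ ≃L[ℝ] ℂ) ∘ f := rfl
  rw [this, Complex.conjCLE.comp_fderiv]
  rfl

lemma wd_conj (hf : DifferentiableAt ℝ f z) :
    wd (fun w => conj (f w)) z = conj (wdb f z) := by
  unfold wd wdb
  rw [fderiv_conj_apply hf, fderiv_conj_apply hf]
  simp only [map_div₀, map_sub, map_add, map_mul, Complex.conj_I, map_ofNat]
  ring

lemma wdb_conj (hf : DifferentiableAt ℝ f z) :
    wdb (fun w => conj (f w)) z = conj (wd f z) := by
  unfold wd wdb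
  rw [fderiv_conj_apply hf, fderiv_conj_apply hf]
  simp only [map_div₀, map_sub, map_add, map_mul, Complex.conj_I, map_ofNat]
  ring

lemma fderiv_inv_apply (hf : DifferentiableAt ℝ f z) (hz : f z ≠ 0) (v : ℂ) :
    fderiv ℝ (fun w => (f w)⁻¹) z v = -((f z)^2)⁻¹ * fderiv ℝ f z v := by
  have h1 : (fun w => (f w)⁻¹) = Inv.inv ∘ f := rfl
  rw [h1, fderiv_comp z (differentiableAt_inv hz) hf, fderiv_inv' hz]
  simp only [ContinuousLinearMap.comp_apply, ContinuousLinearMap.neg_apply,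
    ContinuousLinearMap.mulLeftRight_apply]
  rw [sq, mul_inv]
  ring

lemma wd_inv (hf : DifferentiableAt ℝ f z) (hz : f z ≠ 0) :
    wd (fun w => (f w)⁻¹) z = -wd f z / (f z)^2 := by
  unfold wd
  rw [fderiv_inv_apply hf hz, fderiv_inv_apply hf hz]
  field_simp
  ring

lemma wdb_inv (hf : DifferentiableAt ℝ f z) (hz : f z ≠ 0) :
    wdb (fun w => (f w)⁻¹) z = -wdb f z / (f z)^2 := by
  unfold wdb
  rw [fderiv_inv_apply hf hz, fderiv_inv_apply hf hz]
  field_simp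
  ring

lemma wd_const (c : ℂ) : wd (fun _ => c) z = 0 := by
  unfold wd; simp

lemma wdb_const (c : ℂ) : wdb (fun _ => c) z = 0 := by
  unfold wdb; simp

end helpers

theorem stmt_11 (ψ₁ ψ₂ : ℂ → ℂ)
    (hψ₁ : ContDiff ℝ (⊤ : ℕ∞) ψ₁) (hψ₂ : ContDiff ℝ (⊤ : ℕ∞) ψ₂)
    (hD₁ : ∀ z, wd ψ₁ z =
      ((‖ψ₁ z‖ ^ 2 + ‖ψ₂ z‖ ^ 2 : ℝ) : ℂ) * ψ₂ z)
    (hD₂ : ∀ z, wdb ψ₂ z =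
      -((‖ψ₁ z‖ ^ 2 + ‖ψ₂ z‖ ^ 2 : ℝ) : ℂ) * ψ₁ z)
    (U : Set ℂ) (hU : IsOpen U) (hψ₂0 : ∀ z ∈ U, ψ₂ z ≠ 0)
    (ρ : ℂ → ℂ) (hρ : ∀ z, ρ z = Complex.I * conj (ψ₁ z) / ψ₂ z) :
    ∀ z ∈ U,
      wd (fun w => wdb ρ w) z -
        (2 * conj (ρ z) / (1 + ‖ρ z‖ ^ 2)) * wd ρ z * wdb ρ z = 0 := by
  -- Q as a complex-valued function
  set Q : ℂ → ℂ := fun w => ψ₁ w * conj (ψ₁ w) + ψ₂ w * conj (ψ₂ w) with hQdef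
  have hQcast : ∀ w, ((‖ψ₁ w‖ ^ 2 + ‖ψ₂ w‖ ^ 2 : ℝ) : ℂ) = Q w := by
    intro w
    simp [hQdef, Complex.mul_conj, Complex.sq_norm]
  have hd1 : ∀ w, DifferentiableAt ℝ ψ₁ w := fun w =>
    (hψ₁.differentiable (by simp)).differentiableAt
  have hd2 : ∀ w, DifferentiableAt ℝ ψ₂ w := fun w =>
    (hψ₂.differentiable (by simp)).differentiableAt
  have hdc1 : ∀ w, DifferentiableAt ℝ (fun v => conj (ψ₁ v)) w := fun w =>
    Complex.conjCLE.differentiableAt.comp w (hd1 w)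
  have hdc2 : ∀ w, DifferentiableAt ℝ (fun v => conj (ψ₂ v)) w := fun w =>
    Complex.conjCLE.differentiableAt.comp w (hd2 w)
  have hρfun : ρ = fun w => Complex.I * conj (ψ₁ w) * (ψ₂ w)⁻¹ := by
    funext w; rw [hρ w]; ring
  -- step 1: formula for wdb ρ at points where ψ₂ ≠ 0
  have step1 : ∀ w, ψ₂ w ≠ 0 → wdb ρ w = Complex.I * (Q w)^2 / (ψ₂ w)^2 := by
    intro w hw
    have hdinv : DifferentiableAt ℝ (fun v => (ψ₂ v)⁻¹) w :=
      (hd2 w).inv hw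
    have hmul1 : DifferentiableAt ℝ (fun v => Complex.I * conj (ψ₁ v)) w :=
      (differentiableAt_const _).mul (hdc1 w)
    rw [hρfun]
    rw [wdb_mul hmul1 hdinv, wdb_mul (differentiableAt_const _) (hdc1 w),
      wdb_inv (hd2 w) hw, wdb_const, wdb_conj (hd1 w), hD₁ w, hD₂ w, hQcast w]
    have hQc : conj (Q w) = Q w := by simp [hQdef]; ring
    rw [map_mul, hQc]
    field_simp
    ring
  intro z hz
  have hz2 : ψ₂ z ≠ 0 := hψ₂0 z hz
  have hcz2 : conj (ψ₂ z) ≠ 0 := by simpa using hz2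
  -- rewrite the second derivative using step1 on a neighborhood
  have hev : (fun w => wdb ρ w) =ᶠ[nhds z] (fun w => Complex.I * (Q w * Q w) * ((ψ₂ w)⁻¹ * (ψ₂ w)⁻¹)) := by
    filter_upwards [hU.mem_nhds hz] with w hw
    rw [step1 w (hψ₂0 w hw)]
    field_simp
  rw [wd_congr hev]
  -- differentiability facts at z
  have hdQ : DifferentiableAt ℝ Q z :=
    ((hd1 z).mul (hdc1 z)).add ((hd2 z).mul (hdc2 z))
  have hdQQ : DifferentiableAt ℝ (fun w => Q w * Q w) z := hdQ.mul hdQ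
  have hdIQQ : DifferentiableAt ℝ (fun w => Complex.I * (Q w * Q w)) z :=
    (differentiableAt_const _).mul hdQQ
  have hdinv : DifferentiableAt ℝ (fun v => (ψ₂ v)⁻¹) z := (hd2 z).inv hz2
  have hdinv2 : DifferentiableAt ℝ (fun v => (ψ₂ v)⁻¹ * (ψ₂ v)⁻¹) z := hdinv.mul hdinv
  -- wd Q
  have hQc : ∀ w, conj (Q w) = Q w := by intro w; simp [hQdef]; ring
  have hwdQ : wd Q z = ψ₁ z * conj (wdb ψ₁ z) + conj (ψ₂ z) * wd ψ₂ z := by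
    have hsplit : wd Q z = wd (fun w => ψ₁ w * conj (ψ₁ w)) z
        + wd (fun w => ψ₂ w * conj (ψ₂ w)) z := by
      unfold wd
      rw [hQdef, fderiv_fun_add (f := fun w => ψ₁ w * conj (ψ₁ w)) (g := fun w => ψ₂ w * conj (ψ₂ w)) ((hd1 z).mul (hdc1 z)) ((hd2 z).mul (hdc2 z))]
      simp only [ContinuousLinearMap.add_apply]
      ring
    rw [hsplit, wd_mul (hd1 z) (hdc1 z), wd_mul (hd2 z) (hdc2 z),
      wd_conj (hd1 z), wd_conj (hd2 z), hD₁ z, hD₂ z, hQcast z, map_mul, map_neg, hQc]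
    ring
  -- wd of the inverse
  have hwdinv : wd (fun v => (ψ₂ v)⁻¹) z = -wd ψ₂ z / (ψ₂ z)^2 := wd_inv (hd2 z) hz2
  -- compute second derivative
  have hsecond : wd (fun w => Complex.I * (Q w * Q w) * ((ψ₂ w)⁻¹ * (ψ₂ w)⁻¹)) z =
      Complex.I * (2 * Q z * (ψ₁ z * conj (wdb ψ₁ z) + conj (ψ₂ z) * wd ψ₂ z) * (ψ₂ z)⁻¹ * (ψ₂ z)⁻¹
        - 2 * (Q z)^2 * wd ψ₂ z / (ψ₂ z)^2 * (ψ₂ z)⁻¹) := by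
    rw [wd_mul hdIQQ hdinv2, wd_mul (differentiableAt_const _) hdQQ,
      wd_mul hdQ hdQ, wd_mul hdinv hdinv, wd_const, hwdQ, hwdinv]
    ring
  rw [hsecond]
  -- first derivatives of ρ
  have hwdρ : wd ρ z = Complex.I * (conj (wdb ψ₁ z) * ψ₂ z - conj (ψ₁ z) * wd ψ₂ z) / (ψ₂ z)^2 := by
    rw [hρfun]
    rw [wd_mul (show DifferentiableAt ℝ (fun v => Complex.I * conj (ψ₁ v)) z from (differentiableAt_const _).mul (hdc1 z)) (show DifferentiableAt ℝ (fun v => (ψ₂ v)⁻¹) z from (hd2 z).inv hz2),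
      wd_mul (differentiableAt_const _) (hdc1 z), wd_const, wd_conj (hd1 z), hwdinv]
    field_simp
    ring
  have hwdbρ : wdb ρ z = Complex.I * (Q z)^2 / (ψ₂ z)^2 := step1 z hz2
  -- values of ρ and conj ρ
  have hρz : ρ z = Complex.I * conj (ψ₁ z) / ψ₂ z := hρ z
  have hcρz : conj (ρ z) = -Complex.I * ψ₁ z / conj (ψ₂ z) := by
    rw [hρz, map_div₀, map_mul]
    simp
  have habsρ : ((‖ρ z‖ : ℝ) : ℂ) ^ 2 = ρ z * conj (ρ z) := by
    rw [← Complex.ofReal_pow, Complex.sq_norm]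
    exact (Complex.mul_conj _).symm
  -- nonvanishing of the denominator
  have hden : (1 : ℂ) + ((‖ρ z‖ : ℝ) : ℂ) ^ 2 ≠ 0 := by
    rw [← Complex.ofReal_pow]
    have : (1 : ℂ) + ((‖ρ z‖ ^ 2 : ℝ) : ℂ) = ((1 + ‖ρ z‖ ^ 2 : ℝ) : ℂ) := by
      push_cast; ring
    rw [this, Complex.ofReal_ne_zero]
    positivity
  have h2 : Complex.I ^ 2 = -1 := Complex.I_sq
  have h3 : Complex.I ^ 3 = -Complex.I := by rw [pow_succ, h2]; ring
  have h4 : Complex.I ^ 4 = 1 := by rw [pow_succ, h3]; simp [Complex.I_mul_I]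
  have h5 : Complex.I ^ 5 = Complex.I := by rw [pow_succ, h4]; ring
  have h6 : Complex.I ^ 6 = -1 := by rw [pow_succ, h5]; rw [Complex.I_mul_I]
  have hQzz : Q z = ψ₁ z * conj (ψ₁ z) + ψ₂ z * conj (ψ₂ z) := rfl
  have hq0 : Q z ≠ 0 := by
    rw [← hQcast z, Complex.ofReal_ne_zero]
    have h2p : 0 < ‖ψ₂ z‖ := norm_pos_iff.mpr hz2
    positivity
  have hcoef : 2 * conj (ρ z) / (1 + (↑(‖ρ z‖) : ℂ) ^ 2) =
      -(2 * Complex.I * ψ₁ z * ψ₂ z) / Q z := by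
    have hmulρ : Complex.I * conj (ψ₁ z) / ψ₂ z * (-Complex.I * ψ₁ z / conj (ψ₂ z))
        = ψ₁ z * conj (ψ₁ z) / (ψ₂ z * conj (ψ₂ z)) := by
      rw [div_mul_div_comm]
      congr 1
      linear_combination (-(conj (ψ₁ z) * ψ₁ z)) * h2
    rw [habsρ, hcρz, hρz, hmulρ]
    rw [hQzz] at hq0 ⊢
    have hq0' : ψ₂ z * conj (ψ₂ z) + ψ₁ z * conj (ψ₁ z) ≠ 0 := by
      rw [add_comm]; exact hq0
    field_simp
    ring
  rw [hcoef, hwdρ, hwdbρ]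
  field_simp
  rw [hQzz]
  ring_nf
  simp only [h3]
  ring
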